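/- Let K > r be positive integers. Let H ∈ ℝ^{K×K} be symmetric, let V ∈ ℝ^{K×r} and W ∈ ℝ^{K×r} have orthonormal columns, let D = diag(d₁,…,d_r) with d₁,…,d_r > 0, let ε ∈ ℝ^{r×r}, and suppose H V = V D + W ε. Let V_ε ∈ ℝ^{K×r} have orthonormal columns each of which is an eigenvector of H, and suppose that for every j ∈ {1,…,r} and every k ∈ {1,…,K}, d_j ≠ Λ_k(P_{V_ε}^⊥ H P_{V_ε}^⊥). Then ‖P_{V_ε} − P_V‖_F ≤ 2 ( Σ_{j=1}^r ‖ε_{·j}‖₂² / min_{k∈{1,…,K}} ( d_j − Λ_k(P_{V_ε}^⊥ H P_{V_ε}^⊥) )² )^{1/2}, where ε_{·j} denotes the j-th column of ε. -/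

import Mathlib

/-!
Since the columns of `V_ε` are eigenvectors of `H`, their span is `H`-invariant, so
`P^⊥ H V_ε = 0` for `P = V_ε V_εᵀ`, and `X = P^⊥ V` satisfies `A X = X D + P^⊥ W ε` with
`A = P^⊥ H P^⊥`. Column by column this reads `(A - d_j) x_j = P^⊥ W ε_j`; as `A` is symmetric
and `d_j` lies at distance at least `δ_j = min_k |d_j - Λ_k(A)|` from its spectrum,
`‖x_j‖ ≤ ‖ε_j‖ / δ_j`. Finally, for orthogonal projections of equal rank,
`‖P - V Vᵀ‖_F² = 2 ‖P^⊥ V‖_F²`.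
-/

open Matrix BigOperators

/-- The `k`-th largest eigenvalue (0-indexed: `k = 0` is the largest) of a
Hermitian real matrix, counted with multiplicity. -/
noncomputable def eigsDesc {n : ℕ} {A : Matrix (Fin n) (Fin n) ℝ} (hA : A.IsHermitian)
    (k : Fin n) : ℝ :=
  (hA.eigenvalues ∘ Tuple.sort hA.eigenvalues) k.rev

noncomputable def frob {a b : ℕ} (A : Matrix (Fin a) (Fin b) ℝ) : ℝ :=
  Real.sqrt (∑ i, ∑ j, A i j ^ 2)

open scoped RealInnerProductSpace

namespace Matrix

variable {m n o : Type*}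

lemma sum_sq_eq_dotProduct [Fintype n] (x : n → ℝ) : ∑ i, x i ^ 2 = x ⬝ᵥ x := by
  simp only [dotProduct, sq]

lemma sum_sq_eq_trace_transpose_mul [Fintype m] [Fintype n] (M : Matrix m n ℝ) :
    ∑ i, ∑ j, M i j ^ 2 = (Mᵀ * M).trace := by
  rw [Finset.sum_comm]
  simp only [trace, diag_apply, mul_apply, transpose_apply, sq]

lemma col_add (M N : Matrix m n ℝ) (j : n) : (M + N).col j = M.col j + N.col j := rfl

lemma col_mul [Fintype n] (M : Matrix m n ℝ) (N : Matrix n o ℝ) (j : o) :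
    (M * N).col j = M *ᵥ N.col j := by
  ext i
  simp only [col_apply, mul_apply, mulVec, dotProduct]

lemma mulVec_dotProduct_mulVec [Fintype m] [Fintype n] (M : Matrix m n ℝ) (v w : n → ℝ) :
    M *ᵥ v ⬝ᵥ M *ᵥ w = v ⬝ᵥ (Mᵀ * M) *ᵥ w := by
  rw [← mulVec_mulVec, dotProduct_mulVec v Mᵀ, vecMul_transpose]

lemma sum_sq_mulVec_of_transpose_mul_self_eq_one [Fintype m] [Fintype n] [DecidableEq n]
    {W : Matrix m n ℝ} (hW : Wᵀ * W = 1) (v : n → ℝ) :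
    ∑ i, (W *ᵥ v) i ^ 2 = ∑ i, v i ^ 2 := by
  rw [sum_sq_eq_dotProduct, sum_sq_eq_dotProduct, mulVec_dotProduct_mulVec, hW, one_mulVec]

lemma mul_eq_mul_diagonal_of_mulVec_col [Fintype m] [Fintype n] [DecidableEq n]
    {H : Matrix m m ℝ} {U : Matrix m n ℝ} {μ : n → ℝ}
    (h : ∀ j, H *ᵥ U.col j = μ j • U.col j) : H * U = U * diagonal μ :=
  ext_col fun j => by rw [col_mul, h, col_mul, col_diagonal, mulVec_single, op_smul_eq_smul]

section Projection

variable [Fintype m] [Fintype n] [DecidableEq n] {U : Matrix m n ℝ}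

lemma isIdempotentElem_mul_transpose (hU : Uᵀ * U = 1) : IsIdempotentElem (U * Uᵀ) := by
  rw [IsIdempotentElem, Matrix.mul_assoc, ← Matrix.mul_assoc Uᵀ, hU, Matrix.one_mul]

lemma trace_mul_transpose (hU : Uᵀ * U = 1) : (U * Uᵀ).trace = Fintype.card n := by
  rw [trace_mul_comm, hU, trace_one]

lemma transpose_one_sub_mul_transpose_mul_self [DecidableEq m] (hU : Uᵀ * U = 1) :
    (1 - U * Uᵀ)ᵀ * (1 - U * Uᵀ) = 1 - U * Uᵀ := by
  rw [transpose_sub, transpose_one, transpose_mul, transpose_transpose,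
    (isIdempotentElem_mul_transpose hU).one_sub.eq]

lemma sum_sq_one_sub_mul_transpose_mulVec_le [DecidableEq m] (hU : Uᵀ * U = 1) (v : m → ℝ) :
    ∑ i, ((1 - U * Uᵀ) *ᵥ v) i ^ 2 ≤ ∑ i, v i ^ 2 := by
  have hUv : v ⬝ᵥ (U * Uᵀ) *ᵥ v = Uᵀ *ᵥ v ⬝ᵥ Uᵀ *ᵥ v := by
    rw [mulVec_dotProduct_mulVec, transpose_transpose]
  rw [sum_sq_eq_dotProduct, sum_sq_eq_dotProduct, mulVec_dotProduct_mulVec,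
    transpose_one_sub_mul_transpose_mul_self hU, sub_mulVec, one_mulVec, dotProduct_sub, hUv,
    ← sum_sq_eq_dotProduct (Uᵀ *ᵥ v)]
  exact sub_le_self _ (Finset.sum_nonneg fun i _ => sq_nonneg _)

lemma sum_sq_mul_transpose_sub_mul_transpose [DecidableEq m] {V : Matrix m n ℝ}
    (hU : Uᵀ * U = 1) (hV : Vᵀ * V = 1) :
    ∑ i, ∑ j, (U * Uᵀ - V * Vᵀ) i j ^ 2
      = 2 * ∑ i, ∑ j, ((1 - U * Uᵀ) * V : Matrix m n ℝ) i j ^ 2 := by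
  have hP := isIdempotentElem_mul_transpose hU
  have hQ := isIdempotentElem_mul_transpose hV
  have hPQ : ((U * Uᵀ - V * Vᵀ)ᵀ * (U * Uᵀ - V * Vᵀ)).trace
      = 2 * Fintype.card n - 2 * (U * Uᵀ * (V * Vᵀ)).trace := by
    rw [transpose_sub, transpose_mul U, transpose_mul V, transpose_transpose, transpose_transpose,
      sub_mul, mul_sub, mul_sub, hP.eq, hQ.eq, trace_sub, trace_sub, trace_sub,
      trace_mul_comm (V * Vᵀ), trace_mul_transpose hU, trace_mul_transpose hV]
    ring
  have hPpV : (((1 - U * Uᵀ) * V)ᵀ * ((1 - U * Uᵀ) * V)).trace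
      = Fintype.card n - (U * Uᵀ * (V * Vᵀ)).trace := by
    rw [transpose_mul, Matrix.mul_assoc, ← Matrix.mul_assoc (1 - U * Uᵀ)ᵀ,
      transpose_one_sub_mul_transpose_mul_self hU, Matrix.sub_mul, Matrix.one_mul,
      Matrix.mul_sub, hV, trace_sub, trace_one, trace_mul_comm, Matrix.mul_assoc]
  rw [sum_sq_eq_trace_transpose_mul, sum_sq_eq_trace_transpose_mul, hPQ, hPpV]
  ring

lemma compress_mul_one_sub_mul_transpose_mul [DecidableEq m] [Fintype o] {H : Matrix m m ℝ}
    {M : Matrix n n ℝ} {V E : Matrix m o ℝ} {D : Matrix o o ℝ} (hU : Uᵀ * U = 1)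
    (hHU : H * U = U * M) (hHV : H * V = V * D + E) :
    (1 - U * Uᵀ) * H * (1 - U * Uᵀ) * ((1 - U * Uᵀ) * V)
      = (1 - U * Uᵀ) * V * D + (1 - U * Uᵀ) * E := by
  have hPpU : (1 - U * Uᵀ) * U = 0 := by
    rw [Matrix.sub_mul, Matrix.one_mul, Matrix.mul_assoc, hU, Matrix.mul_one, sub_self]
  have hPpHU : (1 - U * Uᵀ) * H * U = 0 := by
    rw [Matrix.mul_assoc, hHU, ← Matrix.mul_assoc, hPpU, Matrix.zero_mul]
  calc (1 - U * Uᵀ) * H * (1 - U * Uᵀ) * ((1 - U * Uᵀ) * V)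
      = (1 - U * Uᵀ) * H * ((1 - U * Uᵀ) * (1 - U * Uᵀ)) * V := by
        simp only [Matrix.mul_assoc]
    _ = (1 - U * Uᵀ) * (H * V) - (1 - U * Uᵀ) * H * U * (Uᵀ * V) := by
        rw [(isIdempotentElem_mul_transpose hU).one_sub.eq]
        simp only [Matrix.mul_sub, Matrix.sub_mul, Matrix.mul_one, Matrix.mul_assoc]
    _ = (1 - U * Uᵀ) * V * D + (1 - U * Uᵀ) * E := by
        rw [hPpHU, Matrix.zero_mul, sub_zero, hHV, Matrix.mul_add, Matrix.mul_assoc]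

end Projection

namespace IsHermitian

variable [Fintype n] [DecidableEq n] {A : Matrix n n ℝ}

lemma iInf_sq_sub_eigenvalues_mul_le (hA : A.IsHermitian) (c : ℝ) (x : n → ℝ) :
    (⨅ k, (c - hA.eigenvalues k) ^ 2) * ∑ i, x i ^ 2 ≤ ∑ i, (A *ᵥ x - c • x) i ^ 2 := by
  set b := hA.eigenvectorBasis
  have parseval (y : n → ℝ) : ∑ k, ⟪b k, WithLp.toLp 2 y⟫ ^ 2 = ∑ i, y i ^ 2 := by
    rw [b.sum_sq_inner_right, EuclideanSpace.real_norm_sq_eq]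
  have inner_eq (k : n) (y : n → ℝ) : ⟪b k, WithLp.toLp 2 y⟫ = y ⬝ᵥ b k := by
    rw [EuclideanSpace.inner_eq_star_dotProduct, star_trivial]
  have hAt : Aᵀ = A := by rw [← conjTranspose_eq_transpose_of_trivial, hA.eq]
  have coeff (k : n) : ⟪b k, WithLp.toLp 2 (A *ᵥ x - c • x)⟫
      = (hA.eigenvalues k - c) * ⟪b k, WithLp.toLp 2 x⟫ := by
    rw [inner_eq, inner_eq, sub_dotProduct, dotProduct_comm, dotProduct_mulVec,
      ← mulVec_transpose, hAt, mulVec_eigenvectorBasis, smul_dotProduct, smul_dotProduct,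
      dotProduct_comm, smul_eq_mul, smul_eq_mul, sub_mul]
  rw [← parseval x, ← parseval (A *ᵥ x - c • x), Finset.mul_sum]
  refine Finset.sum_le_sum fun k _ => ?_
  rw [coeff, mul_pow, ← neg_sub, neg_sq]
  exact mul_le_mul_of_nonneg_right (ciInf_le (Set.finite_range _).bddBelow k) (sq_nonneg _)

/-- This also holds for empty `n`: there the infimum is `0` by convention, hence so is the
quotient. -/
lemma sum_sq_le_div_iInf (hA : A.IsHermitian) {c : ℝ} (hc : c ∉ Set.range hA.eigenvalues)
    (x : n → ℝ) :
    ∑ i, x i ^ 2 ≤ (∑ i, (A *ᵥ x - c • x) i ^ 2) / ⨅ k, (c - hA.eigenvalues k) ^ 2 := by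
  cases isEmpty_or_nonempty n
  · simp
  obtain ⟨k, hk⟩ := exists_eq_ciInf_of_finite (f := fun k => (c - hA.eigenvalues k) ^ 2)
  have hgap : 0 < ⨅ k, (c - hA.eigenvalues k) ^ 2 :=
    hk ▸ sq_pos_of_ne_zero (sub_ne_zero.2 fun h => hc ⟨k, h.symm⟩)
  rw [le_div_iff₀ hgap, mul_comm]
  exact hA.iInf_sq_sub_eigenvalues_mul_le c x

end IsHermitian

end Matrix

section

variable {n : ℕ} {A : Matrix (Fin n) (Fin n) ℝ}

lemma range_eigsDesc (hA : A.IsHermitian) : Set.range (eigsDesc hA) = Set.range hA.eigenvalues :=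
  (Fin.revPerm.trans (Tuple.sort hA.eigenvalues)).surjective.range_comp _

lemma iInf_comp_eigsDesc {α : Type*} [InfSet α] (hA : A.IsHermitian) (f : ℝ → α) :
    ⨅ k, f (eigsDesc hA k) = ⨅ k, f (hA.eigenvalues k) :=
  (Fin.revPerm.trans (Tuple.sort hA.eigenvalues)).iInf_comp (g := fun k => f (hA.eigenvalues k))

end

theorem stmt6_general (K r : ℕ)
    (H : Matrix (Fin K) (Fin K) ℝ)
    (V W : Matrix (Fin K) (Fin r) ℝ) (hV : Vᵀ * V = 1) (hW : Wᵀ * W = 1)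
    (d : Fin r → ℝ)
    (ε : Matrix (Fin r) (Fin r) ℝ)
    (hHV : H * V = V * Matrix.diagonal d + W * ε)
    (Vε : Matrix (Fin K) (Fin r) ℝ) (hVε : Vεᵀ * Vε = 1)
    (hVεeig : ∀ j : Fin r, ∃ μ : ℝ,
      H.mulVec (fun i => Vε i j) = μ • (fun i => Vε i j))
    (hPHP : ((1 - Vε * Vεᵀ) * H * (1 - Vε * Vεᵀ)).IsHermitian)
    (hgap : ∀ (j : Fin r) (k : Fin K), d j ≠ eigsDesc hPHP k) :
    frob (Vε * Vεᵀ - V * Vᵀ)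
      ≤ 2 * Real.sqrt (∑ j : Fin r,
          (∑ i : Fin r, ε i j ^ 2) / ⨅ k : Fin K, (d j - eigsDesc hPHP k) ^ 2) := by
  choose μ hμ using hVεeig
  have hAX :=
    compress_mul_one_sub_mul_transpose_mul hVε (mul_eq_mul_diagonal_of_mulVec_col hμ) hHV
  set X := (1 - Vε * Vεᵀ) * V
  have hcol (j : Fin r) :
      ∑ i, X i j ^ 2 ≤ (∑ i, ε i j ^ 2) / ⨅ k, (d j - eigsDesc hPHP k) ^ 2 := by
    have hdj : d j ∉ Set.range hPHP.eigenvalues :=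
      range_eigsDesc hPHP ▸ fun ⟨k, hk⟩ => hgap j k hk.symm
    have hres : ((1 - Vε * Vεᵀ) * H * (1 - Vε * Vεᵀ)) *ᵥ X.col j - d j • X.col j
        = (1 - Vε * Vεᵀ) *ᵥ (W *ᵥ ε.col j) := by
      rw [← col_mul, hAX, col_add, col_mul, col_diagonal, mulVec_single, op_smul_eq_smul,
        add_sub_cancel_left, col_mul, col_mul]
    rw [iInf_comp_eigsDesc hPHP fun t => (d j - t) ^ 2]
    calc ∑ i, X i j ^ 2
        ≤ (∑ i, ((1 - Vε * Vεᵀ) *ᵥ (W *ᵥ ε.col j)) i ^ 2)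
            / ⨅ k, (d j - hPHP.eigenvalues k) ^ 2 :=
          hres ▸ hPHP.sum_sq_le_div_iInf hdj (X.col j)
      _ ≤ (∑ i, (W *ᵥ ε.col j) i ^ 2) / ⨅ k, (d j - hPHP.eigenvalues k) ^ 2 :=
          div_le_div_of_nonneg_right (sum_sq_one_sub_mul_transpose_mulVec_le hVε _)
            (Real.iInf_nonneg fun k => sq_nonneg _)
      _ = (∑ i, ε i j ^ 2) / ⨅ k, (d j - hPHP.eigenvalues k) ^ 2 := by
          rw [sum_sq_mulVec_of_transpose_mul_self_eq_one hW]
          rfl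
  set B := ∑ j, (∑ i, ε i j ^ 2) / ⨅ k, (d j - eigsDesc hPHP k) ^ 2
  have hXB : ∑ j, ∑ i, X i j ^ 2 ≤ B := Finset.sum_le_sum fun j _ => hcol j
  have hX0 : 0 ≤ ∑ j, ∑ i, X i j ^ 2 := by positivity
  calc frob (Vε * Vεᵀ - V * Vᵀ) = √(2 * ∑ j, ∑ i, X i j ^ 2) := by
        rw [frob, sum_sq_mul_transpose_sub_mul_transpose hVε hV, Finset.sum_comm]
    _ ≤ √(2 ^ 2 * B) := Real.sqrt_le_sqrt (by linarith)
    _ = 2 * √B := by rw [Real.sqrt_mul (by positivity), Real.sqrt_sq zero_le_two]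

/-- eigenvector perturbation bound: with `H V = V D + W ε`,
`V_ε` orthonormal columns of eigenvectors of `H`, and `d_j` distinct from every
eigenvalue of `P_{V_ε}^⊥ H P_{V_ε}^⊥`, one has
`‖P_{V_ε} − P_V‖_F ≤ 2 (Σ_j ‖ε_{·j}‖₂² / min_k (d_j − Λ_k)²)^{1/2}`. -/
theorem stmt6 (K r : ℕ) (hr : 0 < r) (hKr : r < K)
    (H : Matrix (Fin K) (Fin K) ℝ) (hH : H.IsHermitian)
    (V W : Matrix (Fin K) (Fin r) ℝ) (hV : Vᵀ * V = 1) (hW : Wᵀ * W = 1)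
    (d : Fin r → ℝ) (hd : ∀ j, 0 < d j)
    (ε : Matrix (Fin r) (Fin r) ℝ)
    (hHV : H * V = V * Matrix.diagonal d + W * ε)
    (Vε : Matrix (Fin K) (Fin r) ℝ) (hVε : Vεᵀ * Vε = 1)
    (hVεeig : ∀ j : Fin r, ∃ μ : ℝ,
      H.mulVec (fun i => Vε i j) = μ • (fun i => Vε i j))
    (hPHP : ((1 - Vε * Vεᵀ) * H * (1 - Vε * Vεᵀ)).IsHermitian)
    (hgap : ∀ (j : Fin r) (k : Fin K), d j ≠ eigsDesc hPHP k) :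
    frob (Vε * Vεᵀ - V * Vᵀ)
      ≤ 2 * Real.sqrt (∑ j : Fin r,
          (∑ i : Fin r, ε i j ^ 2) / ⨅ k : Fin K, (d j - eigsDesc hPHP k) ^ 2) :=
  stmt6_general K r H V W hV hW d ε hHV Vε hVε hVεeig hPHP hgap
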